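/- Let N ≥ 4 be a natural number that is not square-free, i.e., N is divisible by some square number other than 1. Then for each r with 2 ≤ r ≤ N−2 there exists a subset K ⊆ {0,1,…,N−1} with |K| = r such that the principal submatrix 𝓕_N[K] of the Fourier matrix is singular (has determinant zero). -/
import Mathlib

open Complex Matrix Finset
open Polynomial

/-- `omegaN N` is the principal `N`-th root of unity `ω = e^{2πi/N}`. -/
noncomputable def omegaN (N : ℕ) : ℂ := Complex.exp (2 * Real.pi * Complex.I / N)

/-- `fourierMinor N K` is the principal submatrix `𝓕_N[K] = (ω^{kℓ})_{k,ℓ ∈ K}`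
of the `N`-dimensional Fourier matrix, indexed by the finite set `K`. -/
noncomputable def fourierMinor (N : ℕ) (K : Finset ℕ) : Matrix K K ℂ :=
  fun k l => omegaN N ^ ((k : ℕ) * (l : ℕ))

lemma omegaN_prim (N : ℕ) (hN : N ≠ 0) : IsPrimitiveRoot (omegaN N) N :=
  Complex.isPrimitiveRoot_exp N hN

lemma conj_omegaN (N : ℕ) : (starRingEnd ℂ) (omegaN N) = (omegaN N)⁻¹ := by
  rw [omegaN, ← Complex.exp_conj, ← Complex.exp_neg]
  congr 1
  simp only [map_div₀, _root_.map_mul, Complex.conj_I, Complex.conj_ofReal, map_ofNat,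
    map_natCast]
  ring

lemma geom_zero (N : ℕ) (u : ℂ) (hu1 : u ≠ 1) (huN : u ^ N = 1) :
    ∑ k ∈ Finset.range N, u ^ k = 0 := by
  rw [geom_sum_eq hu1, huN]
  simp

lemma fourier_dual (N : ℕ) (hN : N ≠ 0) (K : Finset ℕ) (hK : K ⊆ Finset.range N)
    (h : (fourierMinor N K).det = 0) :
    (fourierMinor N (Finset.range N \ K)).det = 0 := by
  classical
  set ω := omegaN N with hω
  have hprim := omegaN_prim N hN
  have hω0 : ω ≠ 0 := hprim.ne_zero hN
  obtain ⟨v, hv0, hv⟩ := Matrix.exists_mulVec_eq_zero_iff.2 h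
  set x : ℕ → ℂ := fun ℓ => if hmem : ℓ ∈ K then v ⟨ℓ, hmem⟩ else 0 with hx
  set y : ℕ → ℂ := fun k => ∑ ℓ ∈ Finset.range N, ω ^ (k * ℓ) * x ℓ with hy
  have hsumK : ∀ k : ℕ, y k = ∑ ℓ ∈ K, ω ^ (k * ℓ) * x ℓ := by
    intro k
    exact (Finset.sum_subset hK (by intro ℓ _ hℓ; simp [hx, hℓ])).symm
  have hyK : ∀ k ∈ K, y k = 0 := by
    intro k hk
    have hv' := congrFun hv ⟨k, hk⟩
    rw [hsumK k]
    rw [← Finset.sum_coe_sort K (fun ℓ => ω ^ (k * ℓ) * x ℓ)]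
    rw [show (0 : ℂ) = (0 : ↥K → ℂ) ⟨k, hk⟩ from rfl, ← hv']
    simp only [Matrix.mulVec, dotProduct, fourierMinor]
    apply Finset.sum_congr rfl
    intro j _
    congr 1
    simp [hx, j.2]
  -- the vector x as a Fin N vector is nonzero
  obtain ⟨k0, hk00⟩ := Function.ne_iff.1 hv0
  have hk0N : (k0 : ℕ) < N := Finset.mem_range.1 (hK k0.2)
  set X : Fin N → ℂ := fun i => x i with hX
  have hX0 : X ≠ 0 := by
    intro hc
    have := congrFun hc ⟨k0, hk0N⟩
    simp only [hX, Pi.zero_apply] at this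
    rw [hx] at this
    simp only [dif_pos k0.2] at this
    rw [show (⟨(k0 : ℕ), k0.2⟩ : ↥K) = k0 from Subtype.ext rfl] at this
    exact hk00 this
  set W : Matrix (Fin N) (Fin N) ℂ := Matrix.vandermonde (fun i => ω ^ (i : ℕ)) with hW
  have hWdet : W.det ≠ 0 := by
    rw [hW, Matrix.det_vandermonde]
    apply Finset.prod_ne_zero_iff.2
    intro i _
    apply Finset.prod_ne_zero_iff.2
    intro j hj hzero
    have hij : i < j := Finset.mem_Ioi.1 hj
    have hij' : (i : ℕ) < (j : ℕ) := hij
    have heq : ω ^ (j : ℕ) = ω ^ (i : ℕ) := by linear_combination hzero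
    have := hprim.pow_inj j.2 i.2 heq
    omega
  have hyW : ∀ i : Fin N, y i = W.mulVec X i := by
    intro i
    rw [hy]
    simp only [Matrix.mulVec, dotProduct, hW, Matrix.vandermonde]
    rw [← Fin.sum_univ_eq_sum_range (fun ℓ => ω ^ ((i : ℕ) * ℓ) * x ℓ) N]
    apply Finset.sum_congr rfl
    intro j _
    rw [pow_mul]
    rfl
  -- y is nonzero somewhere on the complement
  have hexists : ∃ k0 ∈ Finset.range N \ K, y k0 ≠ 0 := by
    by_contra hcon
    push_neg at hcon
    have hy0 : W.mulVec X = 0 := by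
      funext i
      rw [← hyW i]
      rcases em ((i : ℕ) ∈ K) with hiK | hiK
      · exact hyK _ hiK
      · exact hcon _ (Finset.mem_sdiff.2 ⟨Finset.mem_range.2 i.2, hiK⟩)
    exact hWdet (Matrix.exists_mulVec_eq_zero_iff.1 ⟨X, hX0, hy0⟩)
  obtain ⟨m0, hm0mem, hm0ne⟩ := hexists
  set Kc := Finset.range N \ K with hKc
  have hconjpow : ∀ a : ℕ, (starRingEnd ℂ) (ω ^ a) = (ω ^ a)⁻¹ := by
    intro a
    rw [map_pow, hω, conj_omegaN, inv_pow]
  set w : ↥Kc → ℂ := fun k => y k with hw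
  have hw0 : w ≠ 0 := by
    intro hc
    exact hm0ne (by simpa [hw] using congrFun hc ⟨m0, hm0mem⟩)
  have hker : ((fourierMinor N Kc).map (starRingEnd ℂ)).mulVec w = 0 := by
    funext ℓsub
    obtain ⟨ℓ, hℓ⟩ := ℓsub
    have hℓN : ℓ < N := Finset.mem_range.1 (Finset.mem_sdiff.1 hℓ).1
    have hℓK : ℓ ∉ K := (Finset.mem_sdiff.1 hℓ).2
    simp only [Matrix.mulVec, dotProduct, Matrix.map_apply, fourierMinor, Pi.zero_apply]
    rw [Finset.sum_coe_sort Kc (fun k => (starRingEnd ℂ) (ω ^ (ℓ * k)) * y k)]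
    rw [Finset.sum_subset (Finset.sdiff_subset (s := Finset.range N) (t := K))
      (by
        intro k hkr hkc
        have hkK : k ∈ K := by
          by_contra hno
          exact hkc (Finset.mem_sdiff.2 ⟨hkr, hno⟩)
        rw [hyK k hkK, mul_zero])]
    have hterm : ∀ k ∈ Finset.range N, (starRingEnd ℂ) (ω ^ (ℓ * k)) * y k
        = ∑ ℓ' ∈ Finset.range N, x ℓ' * ((ω ^ ℓ)⁻¹ * ω ^ ℓ') ^ k := by
      intro k _
      rw [hy, Finset.mul_sum]
      apply Finset.sum_congr rfl
      intro ℓ' _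
      have hcc : (starRingEnd ℂ) (ω ^ (ℓ * k)) = ((ω ^ ℓ)⁻¹) ^ k := by
        rw [hconjpow, pow_mul, inv_pow]
      rw [hcc, mul_comm k ℓ', pow_mul, mul_pow]
      ring
    rw [Finset.sum_congr rfl hterm, Finset.sum_comm]
    apply Finset.sum_eq_zero
    intro ℓ' hℓ'
    have hℓ'N : ℓ' < N := Finset.mem_range.1 hℓ'
    rcases em (ℓ' ∈ K) with hK' | hK'
    · have hne : ℓ' ≠ ℓ := fun hc => hℓK (hc ▸ hK')
      rw [← Finset.mul_sum]
      have hu1 : (ω ^ ℓ)⁻¹ * ω ^ ℓ' ≠ 1 := by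
        intro hc
        have : ω ^ ℓ' = ω ^ ℓ := by
          field_simp at hc
          exact hc
        exact hne (hprim.pow_inj hℓ'N hℓN this)
      have huN : ((ω ^ ℓ)⁻¹ * ω ^ ℓ') ^ N = 1 := by
        rw [mul_pow, inv_pow, ← pow_mul, ← pow_mul, mul_comm ℓ N, mul_comm ℓ' N,
          pow_mul, pow_mul, hprim.pow_eq_one, one_pow, one_pow]
        simp
      rw [geom_zero N _ hu1 huN, mul_zero]
    · have : x ℓ' = 0 := by simp [hx, hK']
      rw [this]
      simp
  have hdetmap : ((fourierMinor N Kc).map (starRingEnd ℂ)).det = 0 :=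
    Matrix.exists_mulVec_eq_zero_iff.1 ⟨w, hw0, hker⟩
  rw [← RingHom.mapMatrix_apply, ← RingHom.map_det] at hdetmap
  exact (_root_.map_eq_zero _).1 hdetmap

lemma constructionA (N p : ℕ) (hN0 : N ≠ 0) (hp : p.Prime) (hpp : p * p ∣ N) (r : ℕ)
    (hr2 : 2 ≤ r) (hrm : r ≤ N / p) :
    ∃ K : Finset ℕ, K ⊆ Finset.range N ∧ K.card = r ∧ (fourierMinor N K).det = 0 := by
  classical
  have hprim := omegaN_prim N hN0
  set ω := omegaN N with hω
  set m := N / p with hm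
  have hpN : p ∣ N := dvd_trans (Dvd.intro p rfl) hpp
  have hNpm : N = p * m := (Nat.mul_div_cancel' hpN).symm
  have hm0 : m ≠ 0 := by
    intro hc; rw [hNpm, hc, mul_zero] at hN0; exact hN0 rfl
  have hpm : p ∣ m := by
    have : p * p ∣ p * m := hNpm ▸ hpp
    exact (mul_dvd_mul_iff_left (by exact_mod_cast hp.ne_zero : p ≠ 0)).1 this
  set P : Finset ℕ := (Finset.range m).image (fun j => p * j) with hP
  have hPcard : P.card = m :=
    (Finset.card_image_of_injective _ (mul_right_injective₀ hp.ne_zero)).trans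
      (Finset.card_range m)
  have hPrange : P ⊆ Finset.range N := by
    intro k hk
    obtain ⟨j, hj, rfl⟩ := Finset.mem_image.1 hk
    rw [Finset.mem_range] at hj ⊢
    calc p * j < p * m := (Nat.mul_lt_mul_left hp.pos).2 hj
      _ = N := hNpm.symm
  have h0P : (0 : ℕ) ∈ P :=
    Finset.mem_image.2 ⟨0, Finset.mem_range.2 (Nat.pos_of_ne_zero hm0), by simp⟩
  have hmP : m ∈ P := by
    refine Finset.mem_image.2 ⟨m / p, Finset.mem_range.2 ?_, Nat.mul_div_cancel' hpm⟩
    exact Nat.div_lt_self (Nat.pos_of_ne_zero hm0) hp.one_lt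
  set B : Finset ℕ := {0, m} with hB
  have hBP : B ⊆ P := by
    intro k hk
    rcases Finset.mem_insert.1 hk with rfl | hk
    · exact h0P
    · rw [Finset.mem_singleton.1 hk]; exact hmP
  have hBcard : B.card = 2 := by
    rw [hB, Finset.card_insert_of_notMem (by simp [Ne.symm hm0]), Finset.card_singleton]
  obtain ⟨K, hBK, hKP, hKcard⟩ :=
    Finset.exists_subsuperset_card_eq (n := r) hBP (by rw [hBcard]; exact hr2) (by rw [hPcard]; exact hrm)
  refine ⟨K, hKP.trans hPrange, hKcard, ?_⟩
  have h0K : (0 : ℕ) ∈ K := hBK (by simp [hB])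
  have hmK : m ∈ K := hBK (by simp [hB])
  apply Matrix.det_zero_of_row_eq (i := (⟨0, h0K⟩ : ↥K)) (j := ⟨m, hmK⟩)
  · intro hc
    exact hm0 (by simpa using (Subtype.ext_iff.1 hc).symm)
  · funext ℓsub
    obtain ⟨ℓ, hℓ⟩ := ℓsub
    obtain ⟨j, _, rfl⟩ := Finset.mem_image.1 (hKP hℓ)
    show ω ^ (0 * (p * j)) = ω ^ (m * (p * j))
    rw [zero_mul, pow_zero, show m * (p * j) = N * j by rw [hNpm]; ring, pow_mul,
      hprim.pow_eq_one, one_pow]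

lemma constructionB (N p : ℕ) (hN0 : N ≠ 0) (hp : p.Prime) (hpp : p * p ∣ N) (r : ℕ)
    (hrm : N / p ≤ r) (hrb : r ≤ N - p) :
    ∃ K : Finset ℕ, K ⊆ Finset.range N ∧ K.card = r ∧ (fourierMinor N K).det = 0 := by
  classical
  have hprim := omegaN_prim N hN0
  set ω := omegaN N with hω
  set m := N / p with hm
  have hpN : p ∣ N := dvd_trans (Dvd.intro p rfl) hpp
  have hNpm : N = p * m := (Nat.mul_div_cancel' hpN).symm
  have hm0 : m ≠ 0 := by
    intro hc; rw [hNpm, hc, mul_zero] at hN0; exact hN0 rfl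
  have hpm : p ∣ m := by
    have : p * p ∣ p * m := hNpm ▸ hpp
    exact (mul_dvd_mul_iff_left (hp.ne_zero : p ≠ 0)).1 this
  have hpm' : p ≤ m := Nat.le_of_dvd (Nat.pos_of_ne_zero hm0) hpm
  have hm2 : 2 ≤ m := le_trans hp.two_le hpm'
  -- the pool: all ℓ < N with ℓ % m ≠ 1
  set Qp : Finset ℕ := (Finset.range N).filter (fun ℓ => ¬ (ℓ % m = 1)) with hQp
  -- the base: all multiples of p below N
  set P : Finset ℕ := (Finset.range m).image (fun j => p * j) with hP
  have hPcard : P.card = m :=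
    (Finset.card_image_of_injective _ (mul_right_injective₀ hp.ne_zero)).trans
      (Finset.card_range m)
  have hPmem : ∀ k, k ∈ P ↔ k < N ∧ p ∣ k := by
    intro k
    constructor
    · rintro hk
      obtain ⟨j, hj, rfl⟩ := Finset.mem_image.1 hk
      rw [Finset.mem_range] at hj
      exact ⟨by rw [hNpm]; exact (Nat.mul_lt_mul_left hp.pos).2 hj, Dvd.intro j rfl⟩
    · rintro ⟨hkN, j, rfl⟩
      refine Finset.mem_image.2 ⟨j, Finset.mem_range.2 ?_, rfl⟩
      rw [hNpm] at hkN
      exact lt_of_mul_lt_mul_left hkN (Nat.zero_le p)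
  have hPQ : P ⊆ Qp := by
    intro k hk
    obtain ⟨hkN, hpk⟩ := (hPmem k).1 hk
    rw [hQp, Finset.mem_filter, Finset.mem_range]
    refine ⟨hkN, fun hc => ?_⟩
    have hdvd : p ∣ k % m := (Nat.dvd_mod_iff hpm).2 hpk
    rw [hc] at hdvd
    have := Nat.le_of_dvd one_pos hdvd
    have h2p := hp.two_le
    omega
  -- cardinality of the pool
  have hEcard : ((Finset.range N).filter (fun ℓ => ℓ % m = 1)).card = p := by
    have hE : (Finset.range N).filter (fun ℓ => ℓ % m = 1)
        = (Finset.range p).image (fun j => m * j + 1) := by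
      ext ℓ
      rw [Finset.mem_filter, Finset.mem_range, Finset.mem_image]
      constructor
      · rintro ⟨hℓN, hℓm⟩
        refine ⟨ℓ / m, Finset.mem_range.2 ?_, ?_⟩
        · by_contra hc
          push_neg at hc
          have h1 : m * p ≤ m * (ℓ / m) := Nat.mul_le_mul_left m hc
          have h2 : m * (ℓ / m) ≤ ℓ := Nat.mul_div_le ℓ m
          have hcomm : m * p = p * m := Nat.mul_comm m p
          rw [hNpm] at hℓN
          omega
        · have := Nat.div_add_mod ℓ m
          omega
      · rintro ⟨j, hj, rfl⟩
        rw [Finset.mem_range] at hj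
        constructor
        · have h1 : m * (j + 1) ≤ m * p := Nat.mul_le_mul_left m hj
          rw [Nat.mul_succ] at h1
          have hcomm : m * p = p * m := Nat.mul_comm m p
          rw [hNpm]
          omega
        · rw [Nat.mul_add_mod, Nat.mod_eq_of_lt (by omega)]
    rw [hE, Finset.card_image_of_injective _ (fun a b hab => by
      have := Nat.eq_of_mul_eq_mul_left (show 0 < m by omega) (by omega : m * a = m * b)
      exact this), Finset.card_range]
  have hQcard : Qp.card = N - p := by
    rw [hQp, Finset.filter_not, Finset.card_sdiff_of_subset (Finset.filter_subset _ _),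
      Finset.card_range, hEcard]
  obtain ⟨K, hPK, hKQ, hKcard⟩ :=
    Finset.exists_subsuperset_card_eq (n := r) hPQ (by rw [hPcard]; exact hrm)
      (by rw [hQcard]; exact hrb)
  have hKrange : K ⊆ Finset.range N := hKQ.trans (Finset.filter_subset _ _)
  refine ⟨K, hKrange, hKcard, ?_⟩
  -- the polynomial vanishing at ζ^s for s ∈ range m, s ≠ 1
  set ζ : ℂ := ω ^ p with hζ
  have hζm : ζ ^ m = 1 := by
    rw [hζ, ← pow_mul, ← hNpm, hprim.pow_eq_one]
  set Q : Polynomial ℂ := ∏ s ∈ (Finset.range m).erase 1, (X - C (ζ ^ s)) with hQ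
  have hmonfac : ∀ s ∈ (Finset.range m).erase 1, (X - C (ζ ^ s)).Monic :=
    fun s _ => monic_X_sub_C _
  have hQmonic : Q.Monic := monic_prod_of_monic _ _ hmonfac
  have h1mem : (1 : ℕ) ∈ Finset.range m := Finset.mem_range.2 (by omega)
  have hQdeg : Q.natDegree = m - 1 := by
    rw [hQ, natDegree_prod_of_monic _ _ hmonfac]
    simp only [natDegree_X_sub_C]
    rw [Finset.sum_const, smul_eq_mul, mul_one, Finset.card_erase_of_mem h1mem,
      Finset.card_range]
  -- the kernel vector
  set xv : ℕ → ℂ := fun k => if p ∣ k then Q.coeff (k / p) else 0 with hxv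
  set v : ↥K → ℂ := fun k => xv k with hv
  have hstar : p * (m - 1) ∈ K := hPK ((hPmem _).2
    ⟨by rw [hNpm]; exact (Nat.mul_lt_mul_left hp.pos).2 (by omega), Dvd.intro _ rfl⟩)
  have hv0 : v ≠ 0 := by
    intro hc
    have := congrFun hc ⟨p * (m - 1), hstar⟩
    rw [hv] at this
    simp only [hxv, Pi.zero_apply] at this
    rw [if_pos (Dvd.intro _ rfl), Nat.mul_div_cancel_left _ hp.pos] at this
    rw [show m - 1 = Q.natDegree from hQdeg.symm, hQmonic.coeff_natDegree] at this
    exact one_ne_zero this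
  have hker : (fourierMinor N K).mulVec v = 0 := by
    funext ℓsub
    obtain ⟨ℓ, hℓK⟩ := ℓsub
    have hℓQ := hKQ hℓK
    rw [hQp, Finset.mem_filter] at hℓQ
    obtain ⟨hℓN, hℓm1⟩ := hℓQ
    show ∑ k : ↥K, ω ^ (ℓ * (k : ℕ)) * v k = 0
    rw [hv]
    rw [Finset.sum_coe_sort K (fun k => ω ^ (ℓ * k) * xv k)]
    rw [← Finset.sum_subset hPK (by
      intro k hkK hkP
      have : ¬ p ∣ k := by
        intro hdvd
        exact hkP ((hPmem k).2 ⟨Finset.mem_range.1 (hKrange hkK), hdvd⟩)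
      rw [hxv]
      simp only [if_neg this, mul_zero])]
    rw [hP, Finset.sum_image (fun a _ b _ hab =>
      mul_left_cancel₀ hp.ne_zero hab)]
    have hterm : ∀ j ∈ Finset.range m,
        ω ^ (ℓ * (p * j)) * xv (p * j) = Q.coeff j * (ζ ^ ℓ) ^ j := by
      intro j _
      rw [hxv]
      simp only [if_pos (Dvd.intro j rfl), Nat.mul_div_cancel_left _ hp.pos]
      rw [show ℓ * (p * j) = p * ℓ * j by ring, pow_mul, pow_mul, ← hζ]
      ring
    rw [Finset.sum_congr rfl hterm]
    rw [← Polynomial.eval_eq_sum_range' (n := m) (by omega : Q.natDegree < m)]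
    have hmod : ζ ^ ℓ = ζ ^ (ℓ % m) := by
      conv_lhs => rw [← Nat.div_add_mod ℓ m]
      rw [pow_add, pow_mul, hζm, one_pow, one_mul]
    rw [hQ, Polynomial.eval_prod]
    apply Finset.prod_eq_zero (i := ℓ % m)
    · exact Finset.mem_erase.2 ⟨hℓm1, Finset.mem_range.2 (Nat.mod_lt _ (by omega))⟩
    · rw [eval_sub, eval_X, eval_C, hmod, sub_self]
  exact Matrix.exists_mulVec_eq_zero_iff.1 ⟨v, hv0, hker⟩

/-- If `N ≥ 4` is not square-free, then for every `2 ≤ r ≤ N - 2` the Fourier matrix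
`𝓕_N` has a singular `r × r` principal submatrix. -/
theorem fourier_exists_zero_principal_minor_of_not_squarefree
    (N : ℕ) (hN : 4 ≤ N) (hsf : ¬ Squarefree N)
    (r : ℕ) (hr2 : 2 ≤ r) (hrN : r ≤ N - 2) :
    ∃ K : Finset ℕ, K ⊆ Finset.range N ∧ K.card = r ∧ (fourierMinor N K).det = 0 := by
  have hN0 : N ≠ 0 := by omega
  obtain ⟨p, hp, hpp⟩ : ∃ p, p.Prime ∧ p * p ∣ N := by
    by_contra hc
    push_neg at hc
    exact hsf (Nat.squarefree_iff_prime_squarefree.2 fun q hq hqd => (hc q hq) hqd)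
  have hpN : p ∣ N := dvd_trans (Dvd.intro p rfl) hpp
  have hNpm : N = p * (N / p) := (Nat.mul_div_cancel' hpN).symm
  have hm0 : N / p ≠ 0 := by
    intro hc; rw [hc, mul_zero] at hNpm; omega
  have hpm : p ∣ N / p := by
    have : p * p ∣ p * (N / p) := hNpm ▸ hpp
    exact (mul_dvd_mul_iff_left (hp.ne_zero : p ≠ 0)).1 this
  have hpm' : p ≤ N / p := Nat.le_of_dvd (Nat.pos_of_ne_zero hm0) hpm
  have hpN' : p ≤ N := Nat.le_of_dvd (by omega) hpN
  rcases le_or_gt r (N / p) with hcase | hcase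
  · exact constructionA N p hN0 hp hpp r hr2 hcase
  · rcases le_or_gt r (N - p) with hcase2 | hcase2
    · exact constructionB N p hN0 hp hpp r hcase.le hcase2
    · -- r > N - p : use duality with s = N - r ∈ [2, p)
      have hp2 := hp.two_le
      obtain ⟨K0, hK0r, hK0c, hK0d⟩ :=
        constructionA N p hN0 hp hpp (N - r) (by omega) (by omega)
      refine ⟨Finset.range N \ K0, Finset.sdiff_subset, ?_, ?_⟩
      · rw [Finset.card_sdiff_of_subset hK0r, Finset.card_range, hK0c]
        omega
      · exact fourier_dual N hN0 K0 hK0r hK0d
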